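/- arXiv:2311.10208 — 2 statements merged into one kernel-verified Lean document; each statement's English description precedes it below -/
import Mathlib

section
/- Let μₙ := (λₙ + λₙ⁻¹)/2. Then ∑_{i=1}^{n−1} (λᵢ⁻¹ λₙ + λᵢ λₙ⁻¹) ≥ (n−1) · min(d^{2/(n−1)}, d^{−2/(n−1)}) · μₙ^{n/(n−1)}. -/
/-!
Put `xᵢ = λᵢ / λₙ`, so that the `i`-th summand is `xᵢ + xᵢ⁻¹` and `∏ xᵢ = t := d² / λₙⁿ`.
Since `x + x⁻¹` dominates both `x` and `x⁻¹`, the product of the summands is at least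
`max t t⁻¹ ≥ min(d², d⁻²) · max(λₙ, λₙ⁻¹)ⁿ ≥ min(d², d⁻²) · μₙⁿ`, and AM–GM over the `n - 1`
summands turns this into the bound on their sum.
-/

open Finset

theorem Real.card_mul_prod_rpow_inv_card_le_sum {ι : Type*} (s : Finset ι) (z : ι → ℝ)
    (hz : ∀ i ∈ s, 0 ≤ z i) :
    #s * (∏ i ∈ s, z i) ^ ((#s : ℝ)⁻¹) ≤ ∑ i ∈ s, z i := by
  rcases s.eq_empty_or_nonempty with rfl | hs
  · simp
  have hcard : (0 : ℝ) < #s := by exact_mod_cast hs.card_pos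
  have h := Real.geom_mean_le_arith_mean s (fun _ => 1) z (fun _ _ => zero_le_one)
    (by simpa using hcard) hz
  simp only [Real.rpow_one, one_mul, sum_const, nsmul_eq_mul, mul_one] at h
  rwa [le_div_iff₀ hcard, mul_comm] at h

theorem Real.rpow_min {x y p : ℝ} (hx : 0 ≤ x) (hy : 0 ≤ y) (hp : 0 ≤ p) :
    (min x y) ^ p = min (x ^ p) (y ^ p) := by
  rcases le_total x y with hxy | hxy
  · rw [min_eq_left hxy, min_eq_left (by gcongr)]
  · rw [min_eq_right hxy, min_eq_right (by gcongr)]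

theorem max_prod_prod_inv_le_prod_add_inv {ι : Type*} (s : Finset ι) (x : ι → ℝ)
    (hx : ∀ i ∈ s, 0 < x i) :
    max (∏ i ∈ s, x i) (∏ i ∈ s, x i)⁻¹ ≤ ∏ i ∈ s, (x i + (x i)⁻¹) := by
  rw [← prod_inv_distrib]
  refine max_le (prod_le_prod (fun i hi => (hx i hi).le) fun i hi => ?_)
    (prod_le_prod (fun i hi => (inv_pos.2 (hx i hi)).le) fun i hi => ?_)
  · exact le_add_of_nonneg_right (inv_pos.2 (hx i hi)).le
  · exact le_add_of_nonneg_left (hx i hi).le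

theorem min_inv_mul_pow_add_inv_div_two_le {a b : ℝ} (ha : 0 < a) (hb : 0 < b) (n : ℕ) :
    min a a⁻¹ * ((b + b⁻¹) / 2) ^ n ≤ max (a / b ^ n) (a / b ^ n)⁻¹ := by
  have hmin : 0 ≤ min a a⁻¹ := le_min ha.le (inv_pos.2 ha).le
  rcases le_total b b⁻¹ with hb' | hb'
  · calc min a a⁻¹ * ((b + b⁻¹) / 2) ^ n ≤ a * (b⁻¹) ^ n := by
          gcongr
          · exact min_le_left _ _
          · linarith
      _ = a / b ^ n := by rw [inv_pow, div_eq_mul_inv]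
      _ ≤ _ := le_max_left _ _
  · calc min a a⁻¹ * ((b + b⁻¹) / 2) ^ n ≤ a⁻¹ * b ^ n := by
          gcongr
          · exact min_le_right _ _
          · linarith
      _ = (a / b ^ n)⁻¹ := by rw [inv_div, div_eq_inv_mul]
      _ ≤ _ := le_max_right _ _

theorem min_sq_sq_inv_mul_pow_rpow_inv {d μ : ℝ} (hd : 0 < d) (hμ : 0 ≤ μ) (m : ℕ) :
    (min (d ^ 2) (d ^ 2)⁻¹ * μ ^ (m + 1)) ^ ((m : ℝ)⁻¹)
      = min (d ^ (2 / (m : ℝ))) (d ^ (-2 / (m : ℝ))) * μ ^ (((m : ℝ) + 1) / m) := by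
  have hsq : (d ^ 2) ^ ((m : ℝ)⁻¹) = d ^ (2 / (m : ℝ)) := by
    rw [← Real.rpow_natCast, ← Real.rpow_mul hd.le, Nat.cast_ofNat, div_eq_mul_inv]
  rw [Real.mul_rpow (by positivity) (by positivity),
    Real.rpow_min (by positivity) (by positivity) (by positivity), Real.inv_rpow (by positivity),
    hsq, neg_div, Real.rpow_neg hd.le, ← Real.rpow_natCast, ← Real.rpow_mul hμ, div_eq_mul_inv]
  push_cast
  rfl

theorem stmt9_general (n : ℕ) (lam : ℕ → ℝ) (d : ℝ) (hd : 0 < d)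
    (hpos : ∀ i ∈ Finset.Icc 1 n, 0 < lam i)
    (hprod : ∏ i ∈ Finset.Icc 1 n, lam i = d ^ 2) :
    ∑ i ∈ Finset.Icc 1 (n - 1), ((lam i)⁻¹ * lam n + lam i * (lam n)⁻¹)
      ≥ ((n : ℝ) - 1) * min (d ^ (2 / ((n : ℝ) - 1))) (d ^ (-2 / ((n : ℝ) - 1)))
          * ((lam n + (lam n)⁻¹) / 2) ^ ((n : ℝ) / ((n : ℝ) - 1)) := by
  obtain _ | m := n
  · simp [Real.rpow_nonneg hd.le, sq_nonneg]
  set L := lam (m + 1)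
  have hL : 0 < L := hpos _ (by simp)
  have hx : ∀ i ∈ Icc 1 m, 0 < lam i / L := fun i hi =>
    div_pos (hpos i (Icc_subset_Icc_right m.le_succ hi)) hL
  have hprod_x : ∏ i ∈ Icc 1 m, lam i / L = d ^ 2 / L ^ (m + 1) := by
    rw [prod_div_distrib, prod_const, Nat.card_Icc, Nat.add_sub_cancel, ← hprod,
      prod_Icc_succ_top (by omega), pow_succ, mul_div_mul_right _ _ hL.ne']
  have hsum : ∑ i ∈ Icc 1 m, ((lam i)⁻¹ * L + lam i * L⁻¹)
      = ∑ i ∈ Icc 1 m, (lam i / L + (lam i / L)⁻¹) :=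
    sum_congr rfl fun i _ => by rw [inv_div, div_eq_mul_inv, div_eq_inv_mul, add_comm]
  have hbound : min (d ^ 2) (d ^ 2)⁻¹ * ((L + L⁻¹) / 2) ^ (m + 1)
      ≤ ∏ i ∈ Icc 1 m, (lam i / L + (lam i / L)⁻¹) :=
    (min_inv_mul_pow_add_inv_div_two_le (by positivity) hL _).trans
      (hprod_x ▸ max_prod_prod_inv_le_prod_add_inv _ _ hx)
  have hamgm := Real.card_mul_prod_rpow_inv_card_le_sum (Icc 1 m)
    (fun i => lam i / L + (lam i / L)⁻¹) fun i hi => (add_pos (hx i hi) (inv_pos.2 (hx i hi))).le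
  rw [Nat.card_Icc, Nat.add_sub_cancel] at hamgm
  push_cast
  rw [ge_iff_le, add_sub_cancel_right, hsum, mul_assoc,
    ← min_sq_sq_inv_mul_pow_rpow_inv hd (by positivity)]
  exact le_trans (by gcongr) hamgm

/-- For positive reals `λ₁,…,λₙ` with `λᵢ ≤ λₙ` and `∏ λᵢ = d²` (`d > 0`, `n ≥ 2`), setting
`μₙ = (λₙ + λₙ⁻¹)/2`, one has
`∑_{i<n} (λᵢ⁻¹λₙ + λᵢλₙ⁻¹) ≥ (n−1) · min(d^{2/(n−1)}, d^{−2/(n−1)}) · μₙ^{n/(n−1)}`. -/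
theorem stmt9 (n : ℕ) (hn : 2 ≤ n) (lam : ℕ → ℝ) (d : ℝ) (hd : 0 < d)
    (hpos : ∀ i ∈ Finset.Icc 1 n, 0 < lam i)
    (hle : ∀ i ∈ Finset.Icc 1 n, lam i ≤ lam n)
    (hprod : ∏ i ∈ Finset.Icc 1 n, lam i = d ^ 2) :
    ∑ i ∈ Finset.Icc 1 (n - 1), ((lam i)⁻¹ * lam n + lam i * (lam n)⁻¹)
      ≥ ((n : ℝ) - 1) * min (d ^ (2 / ((n : ℝ) - 1))) (d ^ (-2 / ((n : ℝ) - 1)))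
          * ((lam n + (lam n)⁻¹) / 2) ^ ((n : ℝ) / ((n : ℝ) - 1)) :=
  stmt9_general n lam d hd hpos hprod
end

section
/- Suppose the first-order condition ∇u(x) + ∇_x c(x, F(x)) = 0 holds for every x ∈ X, that B(x) is positive semidefinite for every x ∈ X, that the mixed Hessian D²_{xx̄}c(x, F(x)) is invertible for every x ∈ X, and that F is a local diffeomorphism (det DF(x) ≠ 0 for all x). Then B(x) is positive definite for every x ∈ X. -/
/-- Partial derivative `∂f/∂xⁱ` of a scalar function on `ℝⁿ`. -/
noncomputable def pd {n : ℕ} (i : Fin n) (f : (Fin n → ℝ) → ℝ) (x : Fin n → ℝ) : ℝ :=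
  fderiv ℝ f x (Pi.single i 1)

/-- Hessian matrix `D²f(x)` of a scalar function on `ℝⁿ`. -/
noncomputable def hessMat {n : ℕ} (f : (Fin n → ℝ) → ℝ) (x : Fin n → ℝ) :
    Matrix (Fin n) (Fin n) ℝ :=
  Matrix.of fun i j => pd i (pd j f) x

/-- Mixed second derivative matrix `D²_{xx̄}c(x,x̄)`, entry `(i,k)` being `∂²c/∂xⁱ∂x̄ᵏ`. -/
noncomputable def mixedHess {n : ℕ} (c : (Fin n → ℝ) → (Fin n → ℝ) → ℝ)
    (x xb : Fin n → ℝ) : Matrix (Fin n) (Fin n) ℝ :=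
  Matrix.of fun i k =>
    fderiv ℝ (fun x' => fderiv ℝ (fun xb' => c x' xb') xb (Pi.single k 1)) x (Pi.single i 1)

/-- Jacobian matrix `DF(x)`, entry `(k,j)` being `∂Fᵏ/∂xʲ`. -/
noncomputable def jacMat {n : ℕ} (F : (Fin n → ℝ) → (Fin n → ℝ)) (x : Fin n → ℝ) :
    Matrix (Fin n) (Fin n) ℝ :=
  Matrix.of fun k j => fderiv ℝ F x (Pi.single j 1) k

/-- `B(x) = D²u(x) + D²_{xx}c(x, F(x))`. -/
noncomputable def Bmat {n : ℕ} (c : (Fin n → ℝ) → (Fin n → ℝ) → ℝ)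
    (u : (Fin n → ℝ) → ℝ) (F : (Fin n → ℝ) → (Fin n → ℝ)) (x : Fin n → ℝ) :
    Matrix (Fin n) (Fin n) ℝ :=
  hessMat u x + hessMat (fun y => c y (F x)) x

open scoped ContDiff
open Matrix Filter

lemma psd_det_posDef {m : Type*} [Fintype m] [DecidableEq m] {A : Matrix m m ℝ}
    (h : A.PosSemidef) (hdet : A.det ≠ 0) : A.PosDef := by
  refine posDef_iff_dotProduct_mulVec.2 ⟨h.1, fun x hx => ?_⟩
  rcases lt_or_eq_of_le ((posSemidef_iff_dotProduct_mulVec.1 h).2 x) with hlt | heq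
  · exact hlt
  · exact absurd (Matrix.eq_zero_of_mulVec_eq_zero hdet
      ((h.dotProduct_mulVec_zero_iff x).1 heq.symm)) hx

/-- If the first-order condition holds on `X`, `B(x)` is positive semidefinite on `X`,
the mixed Hessian `D²_{xx̄}c(x, F(x))` is invertible on `X`, and `F` is a local
diffeomorphism (`det DF(x) ≠ 0`), then `B(x)` is positive definite on `X`. -/
theorem stmt14 {n : ℕ} (X Xb : Set (Fin n → ℝ)) (hX : IsOpen X) (hXb : IsOpen Xb)
    (c : (Fin n → ℝ) → (Fin n → ℝ) → ℝ) (u : (Fin n → ℝ) → ℝ)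
    (F : (Fin n → ℝ) → (Fin n → ℝ))
    (hc : ContDiffOn ℝ (⊤ : ℕ∞) (fun p : (Fin n → ℝ) × (Fin n → ℝ) => c p.1 p.2) (X ×ˢ Xb))
    (hu : ContDiffOn ℝ (⊤ : ℕ∞) u X) (hF : ContDiffOn ℝ (⊤ : ℕ∞) F X)
    (hFX : ∀ x ∈ X, F x ∈ Xb)
    (foc : ∀ x ∈ X, ∀ i : Fin n,
      fderiv ℝ u x (Pi.single i 1)
        + fderiv ℝ (fun x' => c x' (F x)) x (Pi.single i 1) = 0)
    (hpsd : ∀ x ∈ X, (Bmat c u F x).PosSemidef)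
    (hmix : ∀ x ∈ X, IsUnit (mixedHess c x (F x)).det)
    (hjac : ∀ x ∈ X, (jacMat F x).det ≠ 0) :
    ∀ x ∈ X, (Bmat c u F x).PosDef := by
  intro x₀ hx₀
  set Φ : (Fin n → ℝ) × (Fin n → ℝ) → ℝ := fun p => c p.1 p.2 with hΦdef
  set y₀ := F x₀ with hy₀def
  have hy₀ : y₀ ∈ Xb := hFX x₀ hx₀
  have hopen : IsOpen (X ×ˢ Xb) := hX.prod hXb
  -- basic smoothness facts
  have hΦat : ∀ p ∈ X ×ˢ Xb, ContDiffAt ℝ 3 Φ p := fun p hp =>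
    ((hc.contDiffAt (hopen.mem_nhds hp)).of_le (WithTop.coe_le_coe.mpr le_top))
  have hΦdiff : ∀ p ∈ X ×ˢ Xb, DifferentiableAt ℝ Φ p := fun p hp =>
    (hΦat p hp).differentiableAt (by norm_num)
  have hmem : (x₀, y₀) ∈ X ×ˢ Xb := ⟨hx₀, hy₀⟩
  have hdΦ2 : ContDiffAt ℝ 2 (fderiv ℝ Φ) (x₀, y₀) :=
    (hΦat _ hmem).fderiv_right (by norm_num)
  have hdA : DifferentiableAt ℝ (fderiv ℝ Φ) (x₀, y₀) :=
    hdΦ2.differentiableAt (by norm_num)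
  set A := fderiv ℝ (fderiv ℝ Φ) (x₀, y₀) with hAdef
  have hsymm : ∀ v w : (Fin n → ℝ) × (Fin n → ℝ), A v w = A w v := fun v w =>
    ((hΦat _ hmem).isSymmSndFDerivAt (by norm_num)) v w
  set e : Fin n → (Fin n → ℝ) := fun i => Pi.single i 1 with hedef
  -- partial derivatives in terms of the full derivative of Φ
  have h1 : ∀ x ∈ X, ∀ y ∈ Xb, ∀ v : (Fin n → ℝ),
      fderiv ℝ (fun x' => c x' y) x v = fderiv ℝ Φ (x, y) (v, 0) := by
    intro x hx y hy v
    have h : HasFDerivAt (fun x' => c x' y)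
        ((fderiv ℝ Φ (x, y)).comp (ContinuousLinearMap.inl ℝ (Fin n → ℝ) (Fin n → ℝ))) x :=
      ((hΦdiff (x, y) ⟨hx, hy⟩).hasFDerivAt.comp x (hasFDerivAt_prodMk_left x y (𝕜 := ℝ)) :)
    rw [h.fderiv]; rfl
  have h2 : ∀ x ∈ X, ∀ y ∈ Xb, ∀ v : (Fin n → ℝ),
      fderiv ℝ (fun y' => c x y') y v = fderiv ℝ Φ (x, y) (0, v) := by
    intro x hx y hy v
    have h : HasFDerivAt (fun y' => c x y')
        ((fderiv ℝ Φ (x, y)).comp (ContinuousLinearMap.inr ℝ (Fin n → ℝ) (Fin n → ℝ))) y :=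
      ((hΦdiff (x, y) ⟨hx, hy⟩).hasFDerivAt.comp y (hasFDerivAt_prodMk_right x y) :)
    rw [h.fderiv]; rfl
  -- evaluation of the second derivative
  have keval : ∀ w : (Fin n → ℝ) × (Fin n → ℝ), HasFDerivAt (fun p => fderiv ℝ Φ p w)
      ((ContinuousLinearMap.apply ℝ ℝ w).comp A) (x₀, y₀) :=
    fun w => (ContinuousLinearMap.apply ℝ ℝ w).hasFDerivAt.comp _ hdA.hasFDerivAt
  -- the Hessian of y ↦ c y y₀ at x₀
  have hhessC : ∀ i j : Fin n,
      hessMat (fun y => c y y₀) x₀ j i = A (e j, 0) (e i, 0) := by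
    intro i j
    have heq : (fun x => fderiv ℝ (fun x' => c x' y₀) x (e i))
        =ᶠ[nhds x₀] fun x => fderiv ℝ Φ (x, y₀) (e i, 0) := by
      filter_upwards [hX.mem_nhds hx₀] with x hx
      exact h1 x hx y₀ hy₀ (e i)
    have hcomp : HasFDerivAt (fun x : (Fin n → ℝ) => fderiv ℝ Φ (x, y₀) (e i, 0))
        (((ContinuousLinearMap.apply ℝ ℝ ((e i, 0) : (Fin n → ℝ) × (Fin n → ℝ))).comp A).comp
          (ContinuousLinearMap.inl ℝ (Fin n → ℝ) (Fin n → ℝ))) x₀ :=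
      ((keval (e i, 0)).comp x₀ (hasFDerivAt_prodMk_left x₀ y₀ (𝕜 := ℝ)) :)
    show pd j (pd i (fun y => c y y₀)) x₀ = _
    unfold pd
    rw [heq.fderiv_eq, hcomp.fderiv]
    rfl
  -- the mixed Hessian
  have hmixedA : ∀ i k : Fin n,
      mixedHess c x₀ y₀ i k = A (e i, 0) (0, e k) := by
    intro i k
    have heq : (fun x' => fderiv ℝ (fun xb' => c x' xb') y₀ (e k))
        =ᶠ[nhds x₀] fun x' => fderiv ℝ Φ (x', y₀) (0, e k) := by
      filter_upwards [hX.mem_nhds hx₀] with x hx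
      exact h2 x hx y₀ hy₀ (e k)
    have hcomp : HasFDerivAt (fun x : (Fin n → ℝ) => fderiv ℝ Φ (x, y₀) (0, e k))
        (((ContinuousLinearMap.apply ℝ ℝ ((0, e k) : (Fin n → ℝ) × (Fin n → ℝ))).comp A).comp
          (ContinuousLinearMap.inl ℝ (Fin n → ℝ) (Fin n → ℝ))) x₀ :=
      ((keval (0, e k)).comp x₀ (hasFDerivAt_prodMk_left x₀ y₀ (𝕜 := ℝ)) :)
    show (fderiv ℝ (fun x' => fderiv ℝ (fun xb' => c x' xb') y₀ (e k)) x₀) (e i) = _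
    rw [heq.fderiv_eq, hcomp.fderiv]
    rfl
  -- Jacobian of F and of G := x ↦ (x, F x)
  have hFd : DifferentiableAt ℝ F x₀ :=
    (hF.contDiffAt (hX.mem_nhds hx₀)).differentiableAt (by norm_num)
  set J := fderiv ℝ F x₀ with hJdef
  have hG : HasFDerivAt (fun x : (Fin n → ℝ) => (x, F x))
      ((ContinuousLinearMap.id ℝ (Fin n → ℝ)).prod J) x₀ :=
    HasFDerivAt.prodMk (hasFDerivAt_id x₀) hFd.hasFDerivAt
  -- differentiate the first-order condition
  have hudiff : ContDiffAt ℝ 3 u x₀ := (hu.contDiffAt (hX.mem_nhds hx₀)).of_le (WithTop.coe_le_coe.mpr le_top)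
  have hdu : DifferentiableAt ℝ (fderiv ℝ u) x₀ :=
    (hudiff.fderiv_right (m := 2) (by norm_num)).differentiableAt (by norm_num)
  have key : ∀ i j : Fin n,
      hessMat u x₀ j i + A (e j, J (e j)) (e i, 0) = 0 := by
    intro i j
    have hg1 : HasFDerivAt (fun x => fderiv ℝ u x (e i))
        ((ContinuousLinearMap.apply ℝ ℝ (e i)).comp (fderiv ℝ (fderiv ℝ u) x₀)) x₀ :=
      (ContinuousLinearMap.apply ℝ ℝ (e i)).hasFDerivAt.comp _ hdu.hasFDerivAt
    have hg2 : HasFDerivAt (fun x => fderiv ℝ Φ (x, F x) (e i, 0))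
        (((ContinuousLinearMap.apply ℝ ℝ ((e i, 0) : (Fin n → ℝ) × (Fin n → ℝ))).comp A).comp
          ((ContinuousLinearMap.id ℝ (Fin n → ℝ)).prod J)) x₀ :=
      ((keval (e i, 0)).comp x₀ hG :)
    have hsum : HasFDerivAt
        (fun x => fderiv ℝ u x (e i) + fderiv ℝ Φ (x, F x) (e i, 0))
        ((ContinuousLinearMap.apply ℝ ℝ (e i)).comp (fderiv ℝ (fderiv ℝ u) x₀)
          + ((ContinuousLinearMap.apply ℝ ℝ ((e i, 0) : (Fin n → ℝ) × (Fin n → ℝ))).comp A).comp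
            ((ContinuousLinearMap.id ℝ (Fin n → ℝ)).prod J)) x₀ := hg1.add hg2
    have hzero : (fun x => fderiv ℝ u x (e i) + fderiv ℝ Φ (x, F x) (e i, 0))
        =ᶠ[nhds x₀] fun _ => (0 : ℝ) := by
      filter_upwards [hX.mem_nhds hx₀] with x hx
      rw [← h1 x hx (F x) (hFX x hx) (e i)]
      exact foc x hx i
    have hfz : fderiv ℝ (fun x => fderiv ℝ u x (e i) + fderiv ℝ Φ (x, F x) (e i, 0)) x₀
        = 0 := by
      rw [hzero.fderiv_eq]; exact fderiv_const_apply 0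
    have := hsum.fderiv
    rw [hfz] at this
    have happ := congrArg (fun (L : (Fin n → ℝ) →L[ℝ] ℝ) => L (e j)) this.symm
    simp only [ContinuousLinearMap.add_apply, ContinuousLinearMap.comp_apply,
      ContinuousLinearMap.zero_apply, ContinuousLinearMap.apply_apply,
      ContinuousLinearMap.prod_apply, ContinuousLinearMap.id_apply] at happ
    have hhu : hessMat u x₀ j i
        = fderiv ℝ (fderiv ℝ u) x₀ (e j) (e i) := by
      show pd j (pd i u) x₀ = _
      unfold pd
      have : HasFDerivAt (fun x => fderiv ℝ u x (e i))
          ((ContinuousLinearMap.apply ℝ ℝ (e i)).comp (fderiv ℝ (fderiv ℝ u) x₀)) x₀ := hg1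
      rw [this.fderiv]
      rfl
    rw [hhu]
    linarith [happ]
  -- assemble : B = -(M ⬝ J)ᵀ
  have hBentry : ∀ i j : Fin n,
      Bmat c u F x₀ j i = -((mixedHess c x₀ y₀ * jacMat F x₀) i j) := by
    intro i j
    have hB : Bmat c u F x₀ j i = hessMat u x₀ j i + A (e j, 0) (e i, 0) := by
      simp only [Bmat, Matrix.add_apply, ← hy₀def, hhessC i j]
    have hsplit : A (e j, J (e j)) (e i, 0)
        = A (e j, 0) (e i, 0) + A (0, J (e j)) (e i, 0) := by
      have : ((e j, J (e j)) : (Fin n → ℝ) × (Fin n → ℝ)) = (e j, 0) + (0, J (e j)) := by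
        simp [Prod.ext_iff]
      rw [this, map_add, ContinuousLinearMap.add_apply]
    have hBval : Bmat c u F x₀ j i = -A (0, J (e j)) (e i, 0) := by
      rw [hB]
      have := key i j
      rw [hsplit] at this
      linarith
    -- expand J (e j) in the basis
    have hexpand : ((0, J (e j)) : (Fin n → ℝ) × (Fin n → ℝ))
        = ∑ k : Fin n, (J (e j) k) • ((0, e k) : (Fin n → ℝ) × (Fin n → ℝ)) := by
      have hsum : (∑ k : Fin n, (J (e j) k) • ((0, e k) : (Fin n → ℝ) × (Fin n → ℝ)))
          = (0, ∑ k : Fin n, (J (e j) k) • e k) := by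
        rw [Prod.ext_iff]
        constructor
        · simp [Prod.fst_sum]
        · simp [Prod.snd_sum]
      rw [hsum]
      congr 1
      ext l
      rw [Finset.sum_apply]
      simp [hedef, Pi.single_apply]
    rw [hBval, hsymm (0, J (e j)) (e i, 0), hexpand, map_sum]
    simp only [_root_.map_smul]
    have : ∀ k, mixedHess c x₀ y₀ i k = A (e i, 0) (0, e k) := hmixedA i
    simp only [Matrix.mul_apply, hmixedA, jacMat, Matrix.of_apply, ← hJdef]
    simp only [smul_eq_mul, hedef]
    congr 1
    exact Finset.sum_congr rfl fun k _ => mul_comm _ _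
  have hBeq : Bmat c u F x₀ = -(mixedHess c x₀ y₀ * jacMat F x₀)ᵀ := by
    ext j i
    rw [hBentry i j]
    simp only [Matrix.neg_apply, Matrix.transpose_apply]
  have hdet : (Bmat c u F x₀).det ≠ 0 := by
    rw [hBeq]
    rw [Matrix.det_neg, Matrix.det_transpose, Matrix.det_mul]
    exact mul_ne_zero (by simp) (mul_ne_zero ((hmix x₀ hx₀).ne_zero) (hjac x₀ hx₀))
  exact psd_det_posDef (hpsd x₀ hx₀) hdet
end
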